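/- arXiv:2401.00164 — 2 statements merged into one kernel-verified Lean document; each statement's English description precedes it below -/
import Mathlib

section
/- Let T : (ℕ → A) → Set (ℕ → A) be a δ-causal multivalued stream transformer with δ ≥ 1 and nonempty compact values. Then there is a unique nonempty compact set F of streams with ⋃_{f ∈ F} T f = F, and for every nonempty compact F_0 and the Picard iteration F_{k+1} = ⋃_{f ∈ F_k} T f, the quantitative bound hausdorffDist F_k F ≤ (1/2)^(k * δ) holds for all k ∈ ℕ. -/
open Metric

/-- The prefix metric on streams: `dist f g = (1/2)^n` where `n` is the first index
at which `f` and `g` differ (Mathlib's `PiNat` distance). -/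
noncomputable instance streamMetricSpace {A : Type*} : MetricSpace (ℕ → A) :=
  letI : TopologicalSpace A := ⊥
  haveI : DiscreteTopology A := ⟨rfl⟩
  PiNat.metricSpace

/-- A multivalued stream transformer `T` is `δ`-causal if whenever two input streams agree
on all indices `< k`, the sets of restrictions to indices `< k + δ` of their output sets agree. -/
def IsCausal {A B : Type*} (δ : ℕ) (T : (ℕ → A) → Set (ℕ → B)) : Prop :=
  ∀ (k : ℕ) (f g : ℕ → A), (∀ i < k, f i = g i) →
    (fun (u : ℕ → B) (i : Fin (k + δ)) => u (i : ℕ)) '' T f =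
      (fun (u : ℕ → B) (i : Fin (k + δ)) => u (i : ℕ)) '' T g

/-! If two streams agree below index `k`, every output of one has an output of the other agreeing
with it below `k + δ`, so `f ↦ T f` is `(1/2)^δ`-Lipschitz into the nonempty compact sets with
the Hausdorff metric. Since the union of a compact family of compact sets is compact, the
strongest post is then a `(1/2)^δ`-Lipschitz self-map of the complete space of nonempty compact
sets of streams, and for `δ ≥ 1` Banach's fixed point theorem gives the fixed set; the rate
`(1/2)^(kδ)` follows because all Hausdorff distances between nonempty sets of streams are at
most `1`. -/

open TopologicalSpace

namespace TopologicalSpace.NonemptyCompacts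

variable {X Y : Type*} [EMetricSpace X] [EMetricSpace Y]

theorem exists_edist_le_edist (P Q : NonemptyCompacts X) {x : X} (hx : x ∈ P) :
    ∃ y ∈ Q, edist x y ≤ edist P Q := by
  obtain ⟨y, hy, hxy⟩ := Q.isCompact.exists_infEDist_eq_edist Q.nonempty x
  exact ⟨y, hy, hxy ▸ infEDist_le_hausdorffEDist_of_mem hx⟩

def biUnion (Φ : X → NonemptyCompacts Y) (hΦ : Continuous Φ) (P : NonemptyCompacts X) :
    NonemptyCompacts Y where
  carrier := ⋃ x ∈ (P : Set X), (Φ x : Set Y)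
  isCompact' := by
    simpa only [Set.biUnion_image] using isCompact_biUnion_coe_of_isCompact (P.isCompact.image hΦ)
  nonempty' :=
    have ⟨x, hx⟩ := P.nonempty
    (Φ x).nonempty.mono (Set.subset_biUnion_of_mem (u := fun x => (Φ x : Set Y)) hx)

theorem lipschitzWith_biUnion {K : NNReal} {Φ : X → NonemptyCompacts Y} (hΦ : LipschitzWith K Φ) :
    LipschitzWith K (biUnion Φ hΦ.continuous) := by
  have approx (P Q : NonemptyCompacts X) :
      ∀ u ∈ biUnion Φ hΦ.continuous P,
        ∃ v ∈ biUnion Φ hΦ.continuous Q, edist u v ≤ K * edist P Q := by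
    intro u hu
    obtain ⟨x, hx, hux⟩ := Set.mem_iUnion₂.1 hu
    obtain ⟨y, hy, hxy⟩ := exists_edist_le_edist P Q hx
    obtain ⟨v, hv, huv⟩ := exists_edist_le_edist (Φ x) (Φ y) hux
    refine ⟨v, Set.mem_biUnion hy hv, ?_⟩
    calc edist u v ≤ edist (Φ x) (Φ y) := huv
      _ ≤ K * edist x y := hΦ x y
      _ ≤ K * edist P Q := by gcongr
  refine fun P Q => hausdorffEDist_le_of_mem_edist (approx P Q) fun v hv => ?_
  simpa only [edist_comm, SetLike.mem_coe] using approx Q P v hv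

end TopologicalSpace.NonemptyCompacts

theorem LipschitzWith.dist_iterate_le_of_isFixedPt {α : Type*} [PseudoMetricSpace α] {K : NNReal}
    {f : α → α} (hf : LipschitzWith K f) {y : α} (hy : Function.IsFixedPt f y) (x : α) (n : ℕ) :
    dist (f^[n] x) y ≤ K ^ n * dist x y := by
  simpa only [(hy.iterate n).eq, NNReal.coe_pow] using (hf.iterate n).dist_le_mul x y

section Streams

variable {A B : Type*}

theorem dist_le_half_pow_iff {f g : ℕ → A} {n : ℕ} :
    dist f g ≤ (1 / 2 : ℝ) ^ n ↔ ∀ i < n, f i = g i :=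
  letI : TopologicalSpace A := ⊥
  haveI : DiscreteTopology A := ⟨rfl⟩
  PiNat.mem_cylinder_iff_dist_le.symm.trans PiNat.mem_cylinder_iff

instance : CompleteSpace (ℕ → A) :=
  letI : TopologicalSpace A := ⊥
  haveI : DiscreteTopology A := ⟨rfl⟩
  PiNat.completeSpace

theorem hausdorffDist_le_one {s t : Set (ℕ → A)} (hs : s.Nonempty) (ht : t.Nonempty) :
    hausdorffDist s t ≤ 1 := by
  have hdist (f g : ℕ → A) : dist f g ≤ 1 := by
    simpa using (dist_le_half_pow_iff (n := 0)).2 (by simp)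
  obtain ⟨⟨f, hf⟩, ⟨g, hg⟩⟩ := And.intro hs ht
  exact hausdorffDist_le_of_mem_dist zero_le_one (fun _ _ => ⟨g, hg, hdist _ _⟩)
    (fun _ _ => ⟨f, hf, hdist _ _⟩)

namespace IsCausal

variable {δ : ℕ} {T : (ℕ → A) → Set (ℕ → B)}

theorem exists_dist_le (hT : IsCausal δ T) {k : ℕ} {f g : ℕ → A} (hfg : ∀ i < k, f i = g i)
    {u : ℕ → B} (hu : u ∈ T f) : ∃ v ∈ T g, dist u v ≤ (1 / 2 : ℝ) ^ (k + δ) := by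
  obtain ⟨v, hv, hvu⟩ : (fun i : Fin (k + δ) => u i) ∈ (fun v (i : Fin (k + δ)) => v i) '' T g :=
    hT k f g hfg ▸ Set.mem_image_of_mem _ hu
  exact ⟨v, hv, dist_le_half_pow_iff.2 fun i hi => (congrFun hvu ⟨i, hi⟩).symm⟩

theorem hausdorffDist_le (hT : IsCausal δ T) (f g : ℕ → A) :
    hausdorffDist (T f) (T g) ≤ (1 / 2 : ℝ) ^ δ * dist f g := by
  rcases eq_or_ne f g with rfl | hne
  · simp
  set n := PiNat.firstDiff f g
  have hfg : ∀ i < n, f i = g i := dist_le_half_pow_iff.1 (PiNat.dist_eq_of_ne hne).le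
  calc hausdorffDist (T f) (T g) ≤ (1 / 2 : ℝ) ^ (n + δ) :=
        hausdorffDist_le_of_mem_dist (by positivity) (fun _ => hT.exists_dist_le hfg)
          (fun _ => hT.exists_dist_le fun i hi => (hfg i hi).symm)
    _ = (1 / 2 : ℝ) ^ δ * dist f g := by rw [PiNat.dist_eq_of_ne hne, pow_add, mul_comm]

end IsCausal

end Streams

/-- For a strongly (δ ≥ 1) causal stream transformer with nonempty compact values there is a
unique nonempty compact fixed set of the strongest post transformer, and the Picard iteration
approximates it with the quantitative bound (1/2)^(k·δ). -/
theorem strongest_post_fixpoint_streams {A : Type*} [Nonempty A]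
    (T : (ℕ → A) → Set (ℕ → A)) (δ : ℕ) (hδ : 1 ≤ δ) (hcausal : IsCausal δ T)
    (hne : ∀ f, (T f).Nonempty) (hcomp : ∀ f, IsCompact (T f)) :
    ∃ F : Set (ℕ → A), (F.Nonempty ∧ IsCompact F ∧ (⋃ f ∈ F, T f) = F) ∧
      (∀ G : Set (ℕ → A), G.Nonempty → IsCompact G → (⋃ f ∈ G, T f) = G → G = F) ∧
      ∀ F₀ : Set (ℕ → A), F₀.Nonempty → IsCompact F₀ →
        ∀ Fs : ℕ → Set (ℕ → A), Fs 0 = F₀ → (∀ k, Fs (k + 1) = ⋃ f ∈ Fs k, T f) →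
          ∀ k : ℕ, hausdorffDist (Fs k) F ≤ (1 / 2 : ℝ) ^ (k * δ) := by
  let Φ (f : ℕ → A) : NonemptyCompacts (ℕ → A) := ⟨⟨T f, hcomp f⟩, hne f⟩
  have hΦ : LipschitzWith ((1 / 2) ^ δ) Φ := .of_dist_le_mul fun f g => by
    rw [NonemptyCompacts.dist_eq]
    exact_mod_cast hcausal.hausdorffDist_le f g
  have hSP : ContractingWith ((1 / 2) ^ δ) (NonemptyCompacts.biUnion Φ hΦ.continuous) :=
    ⟨pow_lt_one₀ (by positivity) (by norm_num) (by omega),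
      NonemptyCompacts.lipschitzWith_biUnion hΦ⟩
  set F := ContractingWith.fixedPoint _ hSP
  refine ⟨F, ⟨F.nonempty, F.isCompact, congrArg SetLike.coe hSP.fixedPoint_isFixedPt⟩, ?_, ?_⟩
  · intro G hG hGc hfix
    exact congrArg SetLike.coe
      (hSP.fixedPoint_unique (x := ⟨⟨G, hGc⟩, hG⟩) (NonemptyCompacts.ext hfix))
  · intro F₀ hF₀ hF₀c Fs h0 hstep k
    have hiter (k : ℕ) :
        Fs k = (NonemptyCompacts.biUnion Φ hΦ.continuous)^[k] ⟨⟨F₀, hF₀c⟩, hF₀⟩ := by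
      induction k with
      | zero => exact h0
      | succ k ih => rw [hstep, ih, Function.iterate_succ_apply']; rfl
    rw [hiter, ← NonemptyCompacts.dist_eq]
    calc _ ≤ ((1 / 2 : NNReal) ^ δ : NNReal) ^ k * dist _ F :=
          hSP.2.dist_iterate_le_of_isFixedPt hSP.fixedPoint_isFixedPt _ k
      _ ≤ (1 / 2 : ℝ) ^ (k * δ) * 1 := by
          push_cast
          rw [← pow_mul, mul_comm δ]
          gcongr
          exact hausdorffDist_le_one hF₀ F.nonempty
      _ = (1 / 2 : ℝ) ^ (k * δ) := mul_one _
end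

section
/- Every shrinking deterministic stream transformer has a unique fixed point: if T : (ℕ → A) → (ℕ → A) satisfies dist (T f) (T g) < dist f g for all streams f ≠ g, then there exists a unique f* with T f* = f*. -/
open Metric

/-!
Distances in the prefix metric lie in `{0} ∪ {(1/2)^n}`, so a strict decrease of distance is a
decrease by at least a factor `1/2`. A shrinking map is therefore a contraction with constant
`1/2`, and Banach's fixed point theorem applies in the complete space of streams.
-/

namespace PiNat

attribute [local instance] PiNat.dist

theorem dist_le_half_mul_of_dist_lt {E : ℕ → Type*} {x y x' y' : ∀ n, E n}
    (h : dist x' y' < dist x y) : dist x' y' ≤ 1 / 2 * dist x y := by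
  rcases eq_or_ne x' y' with rfl | hne'
  · rw [PiNat.dist_self]
    exact mul_nonneg (by norm_num) (PiNat.dist_nonneg x y)
  have hne : x ≠ y := by
    rintro rfl
    exact (PiNat.dist_nonneg x' y').not_gt (by rwa [PiNat.dist_self] at h)
  rw [dist_eq_of_ne hne, dist_eq_of_ne hne'] at h ⊢
  have hlt : firstDiff x y < firstDiff x' y' :=
    (pow_lt_pow_iff_right_of_lt_one₀ (by norm_num) (by norm_num)).1 h
  calc (1 / 2 : ℝ) ^ firstDiff x' y' ≤ (1 / 2) ^ (firstDiff x y + 1) :=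
        pow_le_pow_of_le_one (by norm_num) (by norm_num) hlt
    _ = 1 / 2 * (1 / 2) ^ firstDiff x y := pow_succ' _ _

end PiNat

instance streamCompleteSpace {A : Type*} : CompleteSpace (ℕ → A) :=
  letI : TopologicalSpace A := ⊥
  haveI : DiscreteTopology A := ⟨rfl⟩
  PiNat.completeSpace

theorem contractingWith_half_of_dist_lt {A : Type*} {T : (ℕ → A) → (ℕ → A)}
    (hshrink : ∀ f g : ℕ → A, f ≠ g → dist (T f) (T g) < dist f g) :
    ContractingWith (1 / 2) T := by
  refine ⟨by norm_num, LipschitzWith.of_dist_le_mul fun f g => ?_⟩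
  rcases eq_or_ne f g with rfl | hne
  · simp
  exact_mod_cast PiNat.dist_le_half_mul_of_dist_lt (hshrink f g hne)

/-- Every shrinking deterministic stream transformer has a unique fixed point
(using spherical completeness of the stream space). -/
theorem shrinking_unique_fixpoint {A : Type*} [Nonempty A] (T : (ℕ → A) → (ℕ → A))
    (hshrink : ∀ f g : ℕ → A, f ≠ g → dist (T f) (T g) < dist f g) :
    ∃! fstar : ℕ → A, T fstar = fstar := by
  have hT := contractingWith_half_of_dist_lt hshrink
  exact ⟨ContractingWith.fixedPoint T hT, hT.fixedPoint_isFixedPt,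
    fun _ hf => hT.fixedPoint_unique hf⟩
end
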